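/- For integers ν, ℓ ≥ 1, a real number w, and positive integers ν ≤ k ≤ ν + ℓ − 1, the following inequality holds: the sum over k from ν to ν+ℓ−1 of log(1 + (w/k)²) is at least w² · ∫_ν^{ν+ℓ} dx/(w² + x²). -/

import Mathlib

/-! Since `x ↦ 1 / (w² + x²)` decreases on `x > 0`, its integral over `[ν, ν + ℓ]` is at most the
left Riemann sum `∑ 1 / (w² + k²)`, and termwise `w² / (w² + k²) = y / (1 + y) ≤ log (1 + y)`
for `y = (w / k)²`. -/

open Finset Set

lemma div_one_add_le_log_one_add {y : ℝ} (hy : 0 ≤ y) : y / (1 + y) ≤ Real.log (1 + y) := by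
  have hy₁ : 0 < 1 + y := by positivity
  calc y / (1 + y) = 1 - (1 + y)⁻¹ := by field_simp; ring
    _ ≤ Real.log (1 + y) := Real.one_sub_inv_le_log_of_pos hy₁

lemma antitoneOn_one_div_add_sq {c : ℝ} (hc : 0 ≤ c) :
    AntitoneOn (fun x : ℝ => 1 / (c + x ^ 2)) (Ioi 0) := by
  intro x (hx : 0 < x) y _ hxy
  dsimp only
  gcongr

lemma mul_one_div_add_sq_eq (w : ℝ) {k : ℝ} (hk : k ≠ 0) :
    w ^ 2 * (1 / (w ^ 2 + k ^ 2)) = (w / k) ^ 2 / (1 + (w / k) ^ 2) := by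
  field_simp
  ring

theorem sum_log_ge_integral (ν ℓ : ℕ) (hν : 1 ≤ ν) (w : ℝ) :
    w ^ 2 * ∫ x in (ν : ℝ)..((ν : ℝ) + ℓ), 1 / (w ^ 2 + x ^ 2) ≤
      ∑ k ∈ Finset.Ico ν (ν + ℓ), Real.log (1 + (w / k) ^ 2) := by
  have hν₀ : (0 : ℝ) < ν := by exact_mod_cast hν
  have hanti : AntitoneOn (fun x : ℝ => 1 / (w ^ 2 + x ^ 2)) (Icc ν (ν + ℓ)) :=
    (antitoneOn_one_div_add_sq (sq_nonneg w)).mono fun x hx => hν₀.trans_le hx.1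
  calc w ^ 2 * ∫ x in (ν : ℝ)..((ν : ℝ) + ℓ), 1 / (w ^ 2 + x ^ 2)
      ≤ w ^ 2 * ∑ i ∈ range ℓ, 1 / (w ^ 2 + ((ν : ℝ) + i) ^ 2) :=
        mul_le_mul_of_nonneg_left hanti.integral_le_sum (sq_nonneg w)
    _ = ∑ k ∈ Ico ν (ν + ℓ), (w / k) ^ 2 / (1 + (w / k) ^ 2) := by
        rw [mul_sum, sum_Ico_eq_sum_range, Nat.add_sub_cancel_left]
        refine sum_congr rfl fun i _ => ?_
        rw [Nat.cast_add, mul_one_div_add_sq_eq w (by positivity)]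
    _ ≤ ∑ k ∈ Ico ν (ν + ℓ), Real.log (1 + (w / k) ^ 2) :=
        sum_le_sum fun _ _ => div_one_add_le_log_one_add (sq_nonneg _)
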